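/- arXiv:2604.02469 — 2 statements merged into one kernel-verified Lean document; each statement's English description precedes it below -/
import Mathlib

section
/- Let q be a prime power, A ∈ 𝔽_q[T] monic, and ℓ ≥ 0 an integer. Then the sum over monic divisors B of A of μ(B)·(Ω(B)+1)·Ω(B)·(Ω(B)−1)···(Ω(B)−ℓ) equals (−1)^{Ω(A)}·(Ω(A)+1)! if ℓ = Ω(A)−1, equals (−1)^{Ω(A)}·Ω(A)! if ℓ = Ω(A)−2, and equals 0 otherwise. -/
open Filter Topology Polynomial Asymptotics
open scoped Classical

variable {F : Type} [Field F] [Fintype F]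

/-- The Möbius function for (monic) polynomials over a finite field:
`μ(A) = 1` if `A = 1`, `(-1)^k` if `A` is a product of `k` distinct primes, `0` otherwise. -/
noncomputable def muFF (A : Polynomial F) : ℤ :=
  if Squarefree A then
    (-1) ^ (UniqueFactorizationMonoid.normalizedFactors A).toFinset.card
  else 0

/-- `𝒩(A)`: the set of degrees of prime (monic irreducible) divisors of `A`. -/
noncomputable def NSet (A : Polynomial F) : Finset ℕ :=
  (Finset.range (A.natDegree + 1)).filter fun d =>
    ∃ P : Polynomial F, P.Monic ∧ Irreducible P ∧ P ∣ A ∧ P.natDegree = d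

/-- `Ω(A)`: the number of distinct degrees of prime divisors of `A`. -/
noncomputable def OmegaFF (A : Polynomial F) : ℕ := (NSet A).card

/-- `δ_k(A)`: the `k`-th smallest element of `𝒩(A)` (and `0` if `k > Ω(A)`). -/
noncomputable def deltaSmall (k : ℕ) (A : Polynomial F) : ℕ :=
  ((NSet A).sort (· ≤ ·)).getD (k - 1) 0

/-- `Δ_k(A)`: the `k`-th largest element of `𝒩(A)` (and `0` if `k > Ω(A)`). -/
noncomputable def DeltaLarge (k : ℕ) (A : Polynomial F) : ℕ :=
  (((NSet A).sort (· ≤ ·)).reverse).getD (k - 1) 0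

/-- `P_min(A)`: the set of prime divisors of `A` of minimal degree `δ₁(A)`. -/
noncomputable def Pmin (A : Polynomial F) : Set (Polynomial F) :=
  {P | P.Monic ∧ Irreducible P ∧ P ∣ A ∧ P.natDegree = deltaSmall 1 A}

/-- `𝒟(𝒮)`: monic polynomials whose set of minimal-degree prime divisors is a
singleton `{P}` with `P ∈ 𝒮`. -/
noncomputable def DSet (S : Set (Polynomial F)) : Set (Polynomial F) :=
  {A | A.Monic ∧ ∃ P ∈ S, Pmin A = {P}}

/-- `Q_𝒮^{(k)}(A) = #{P ∈ 𝒮 : P ∣ A, deg P = Δ_k(A)}`. -/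
noncomputable def QS (S : Set (Polynomial F)) (k : ℕ) (A : Polynomial F) : ℕ :=
  {P | P ∈ S ∧ P ∣ A ∧ P.natDegree = DeltaLarge k A}.ncard

/-! Only squarefree divisors contribute; they are the products `∏ S` over sets `S` of prime divisors
of `A`, with `μ = (-1)^#S` and `Ω` the number of distinct degrees in `S`. Over all `S` with a given
set of degrees `T` the signs sum to `(-1)^#T` (the sets `S` and `S ∪ {P}` cancel whenever `deg P`
is already a degree of `S`), so the sum becomes `∑_{k ≤ n} (-1)^k C(n, k) g(k)`, where `n = Ω(A)`
and `g(k) = (ℓ+2)! (C(k, ℓ+1) + C(k, ℓ+2))`. This is an `n`-th forward difference of binomial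
coefficients, which vanishes unless `n ∈ {ℓ+1, ℓ+2}`. -/

open UniqueFactorizationMonoid Finset

theorem Finset.sum_powerset_neg_one_pow_mul_insert_of_mem {α R : Type*} [DecidableEq α]
    [CommRing R] {s : Finset α} {b : α} (hb : b ∈ s) (h : Finset α → R) :
    ∑ t ∈ s.powerset, (-1) ^ #t * h (insert b t) = 0 := by
  rw [← insert_erase hb, sum_powerset_insert (notMem_erase b s), ← sum_add_distrib]
  refine sum_eq_zero fun t ht => ?_
  have hbt : b ∉ t := fun h => notMem_erase b s (mem_powerset.1 ht h)
  rw [insert_idem, card_insert_of_notMem hbt, pow_succ]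
  ring

theorem Finset.sum_powerset_neg_one_pow_mul_image {α β R : Type*} [DecidableEq α]
    [DecidableEq β] [CommRing R] (d : α → β) (s : Finset α) (h : Finset β → R) :
    ∑ t ∈ s.powerset, (-1) ^ #t * h (t.image d) =
      ∑ u ∈ (s.image d).powerset, (-1) ^ #u * h u := by
  induction s using Finset.induction_on generalizing h with
  | empty => simp
  | insert a s ha ih =>
    have hsplit : ∑ t ∈ (insert a s).powerset, (-1) ^ #t * h (t.image d) =
        ∑ u ∈ (s.image d).powerset, (-1) ^ #u * (h u - h (insert (d a) u)) := by
      rw [sum_powerset_insert ha, ih]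
      simp_rw [mul_sub, sum_sub_distrib, image_insert]
      rw [← ih fun u => h (insert (d a) u), sub_eq_add_neg, ← sum_neg_distrib]
      congr 1
      refine sum_congr rfl fun t ht => ?_
      rw [card_insert_of_notMem fun hat => ha (mem_powerset.1 ht hat), pow_succ]
      ring
    rw [hsplit, image_insert]
    by_cases hda : d a ∈ s.image d
    · simp_rw [insert_eq_of_mem hda, mul_sub, sum_sub_distrib,
        sum_powerset_neg_one_pow_mul_insert_of_mem hda, sub_zero]
    · rw [sum_powerset_insert hda, ← sum_add_distrib]
      refine sum_congr rfl fun u hu => ?_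
      rw [card_insert_of_notMem fun h => hda (mem_powerset.1 hu h), pow_succ]
      ring

theorem Int.sum_range_neg_one_pow_mul_choose_mul_choose (n j : ℕ) :
    ∑ k ∈ Finset.range (n + 1), (-1 : ℤ) ^ k * n.choose k * k.choose j =
      if n = j then (-1) ^ n else 0 := by
  -- up to the sign `(-1)^n`, the left side is the `n`-th forward difference of `(· choose j)` at 0
  have hΔ := fwdDiff_iter_choose_zero j n
  rw [fwdDiff_iter_eq_sum_shift] at hΔ
  rw [← mul_one ((-1 : ℤ) ^ n), ← mul_ite_zero, ← hΔ, mul_sum]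
  refine sum_congr rfl fun k hk => ?_
  obtain ⟨i, rfl⟩ := Nat.exists_eq_add_of_le (Nat.lt_succ_iff.1 (mem_range.1 hk))
  have hsq : ((-1 : ℤ) ^ i) * (-1) ^ i = 1 := by rw [← mul_pow]; norm_num
  rw [smul_eq_mul, zero_add, nsmul_one, Nat.cast_id, Nat.add_sub_cancel_left, pow_add]
  linear_combination -(-1) ^ k * ((k + i).choose k * k.choose j : ℤ) * hsq

theorem prod_range_natCast_sub_eq_factorial_mul_choose (n m : ℕ) :
    ∏ i ∈ range m, ((n : ℤ) - i) = m.factorial * n.choose m := by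
  rw [← descPochhammer_eval_eq_prod_range, descPochhammer_eval_eq_descFactorial,
    Nat.descFactorial_eq_factorial_mul_choose, Nat.cast_mul]

theorem sum_range_neg_one_pow_mul_choose_mul_prod (n m : ℕ) :
    ∑ k ∈ range (n + 1), (-1) ^ k * n.choose k * ∏ i ∈ range (m + 1), ((k : ℤ) + 1 - i) =
      if n = m then (-1 : ℤ) ^ n * (n + 1).factorial
      else if n = m + 1 then (-1 : ℤ) ^ n * n.factorial else 0 := by
  have hprod : ∀ k : ℕ, ∏ i ∈ range (m + 1), ((k : ℤ) + 1 - i) =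
      (m + 1).factorial * (k.choose m + k.choose (m + 1)) := by
    intro k
    rw [← Nat.cast_succ, prod_range_natCast_sub_eq_factorial_mul_choose, Nat.choose_succ_succ',
      Nat.cast_add]
  simp_rw [hprod, mul_left_comm _ ((m + 1).factorial : ℤ), ← mul_sum, mul_add, sum_add_distrib]
  rw [Int.sum_range_neg_one_pow_mul_choose_mul_choose,
    Int.sum_range_neg_one_pow_mul_choose_mul_choose]
  split_ifs <;> first | omega | subst_vars; ring

namespace Polynomial

variable {K : Type*} [Field K]

theorem prod_normalizedFactors_of_monic {B : K[X]} (hB : B.Monic) :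
    (normalizedFactors B).prod = B := by
  simpa [hB.leadingCoeff] using leadingCoeff_mul_prod_normalizedFactors B

theorem monic_irreducible_of_subset_normalizedFactors {A : K[X]} (hA : A ≠ 0)
    {S : Finset K[X]} (hS : S ⊆ (normalizedFactors A).toFinset) :
    ∀ p ∈ S, p.Monic ∧ Irreducible p := fun p hp => by
  obtain ⟨hirr, hmon, -⟩ :=
    (Polynomial.mem_normalizedFactors_iff hA).1 (Multiset.mem_toFinset.1 (hS hp))
  exact ⟨hmon, hirr⟩

variable {S : Finset K[X]}

theorem normalizedFactors_prod_of_monic_of_irreducible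
    (hS : ∀ p ∈ S, p.Monic ∧ Irreducible p) : normalizedFactors (∏ p ∈ S, p) = S.val := by
  rw [prod_eq_multiset_prod, Multiset.map_id',
    normalizedFactors_prod_eq _ fun p hp => (hS p hp).2,
    Multiset.map_congr rfl fun p hp => (hS p hp).1.normalize_eq_self, Multiset.map_id']

theorem squarefree_prod_of_monic_of_irreducible (hS : ∀ p ∈ S, p.Monic ∧ Irreducible p) :
    Squarefree (∏ p ∈ S, p) := by
  rw [squarefree_iff_nodup_normalizedFactors
      (monic_prod_of_monic _ _ fun p hp => (hS p hp).1).ne_zero,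
    normalizedFactors_prod_of_monic_of_irreducible hS]
  exact S.nodup

theorem image_prod_powerset_normalizedFactors {A : K[X]} (hA : A.Monic) :
    (fun S => ∏ p ∈ S, p) '' ↑(normalizedFactors A).toFinset.powerset =
      {B | B.Monic ∧ B ∣ A ∧ Squarefree B} := by
  ext B
  simp only [Set.mem_image, mem_coe, mem_powerset, Set.mem_ofPred_eq]
  constructor
  · rintro ⟨S, hS, rfl⟩
    have hSirr := monic_irreducible_of_subset_normalizedFactors hA.ne_zero hS
    have hmon : (∏ p ∈ S, p).Monic := monic_prod_of_monic _ _ fun p hp => (hSirr p hp).1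
    refine ⟨hmon, ?_, squarefree_prod_of_monic_of_irreducible hSirr⟩
    rw [dvd_iff_normalizedFactors_le_normalizedFactors hmon.ne_zero hA.ne_zero,
      normalizedFactors_prod_of_monic_of_irreducible hSirr, Multiset.le_iff_subset S.nodup]
    exact fun p hp => Multiset.mem_toFinset.1 (hS hp)
  · rintro ⟨hmon, hdvd, hsq⟩
    refine ⟨(normalizedFactors B).toFinset, fun p hp => ?_, ?_⟩
    · rw [Multiset.mem_toFinset, Polynomial.mem_normalizedFactors_iff hmon.ne_zero] at hp
      rw [Multiset.mem_toFinset, Polynomial.mem_normalizedFactors_iff hA.ne_zero]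
      exact ⟨hp.1, hp.2.1, hp.2.2.trans hdvd⟩
    · rw [prod_eq_multiset_prod, Multiset.map_id', Multiset.toFinset_val,
        Multiset.dedup_eq_self.2 ((squarefree_iff_nodup_normalizedFactors hmon.ne_zero).1 hsq),
        prod_normalizedFactors_of_monic hmon]

end Polynomial

open Polynomial

variable {K : Type} [Field K]

theorem NSet_eq_image_natDegree {B : K[X]} (hB : B ≠ 0) :
    NSet B = (normalizedFactors B).toFinset.image natDegree := by
  ext d
  simp only [NSet, mem_filter, mem_range, mem_image, Multiset.mem_toFinset,
    Polynomial.mem_normalizedFactors_iff hB]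
  constructor
  · rintro ⟨-, p, hmon, hirr, hdvd, rfl⟩
    exact ⟨p, ⟨hirr, hmon, hdvd⟩, rfl⟩
  · rintro ⟨p, ⟨hirr, hmon, hdvd⟩, rfl⟩
    exact ⟨Nat.lt_succ_of_le (natDegree_le_of_dvd hdvd hB), p, hmon, hirr, hdvd, rfl⟩

theorem squarefree_of_muFF_ne_zero {B : K[X]} (hB : muFF B ≠ 0) : Squarefree B := by
  contrapose! hB
  rw [muFF, if_neg hB]

section MonicIrreducibleProduct

variable {S : Finset K[X]}

theorem muFF_prod_of_monic_of_irreducible (hS : ∀ p ∈ S, p.Monic ∧ Irreducible p) :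
    muFF (∏ p ∈ S, p) = (-1) ^ #S := by
  rw [muFF, if_pos (squarefree_prod_of_monic_of_irreducible hS),
    normalizedFactors_prod_of_monic_of_irreducible hS, val_toFinset]

theorem OmegaFF_prod_of_monic_of_irreducible (hS : ∀ p ∈ S, p.Monic ∧ Irreducible p) :
    OmegaFF (∏ p ∈ S, p) = #(S.image natDegree) := by
  rw [OmegaFF, NSet_eq_image_natDegree (monic_prod_of_monic _ _ fun p hp => (hS p hp).1).ne_zero,
    normalizedFactors_prod_of_monic_of_irreducible hS, val_toFinset]

end MonicIrreducibleProduct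

theorem finsum_monic_dvd_muFF_mul {A : K[X]} (hA : A.Monic) (f : K[X] → ℤ) :
    ∑ᶠ B ∈ {B : K[X] | B.Monic ∧ B ∣ A}, muFF B * f B =
      ∑ S ∈ (normalizedFactors A).toFinset.powerset, (-1) ^ #S * f (∏ p ∈ S, p) := by
  have hsupp : {B : K[X] | B.Monic ∧ B ∣ A} ∩ Function.support (fun B => muFF B * f B) =
      {B | B.Monic ∧ B ∣ A ∧ Squarefree B} ∩ Function.support (fun B => muFF B * f B) := by
    ext B
    simp only [Set.mem_inter_iff, Set.mem_ofPred_eq, Function.mem_support]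
    exact ⟨fun ⟨⟨hmon, hdvd⟩, hne⟩ =>
      ⟨⟨hmon, hdvd, squarefree_of_muFF_ne_zero (left_ne_zero_of_mul hne)⟩, hne⟩,
      fun ⟨⟨hmon, hdvd, _⟩, hne⟩ => ⟨⟨hmon, hdvd⟩, hne⟩⟩
  have hinj : Set.InjOn (fun S => ∏ p ∈ S, p)
      ((normalizedFactors A).toFinset.powerset : Set (Finset K[X])) := by
    intro S hS T hT hST
    rw [← val_inj, ← normalizedFactors_prod_of_monic_of_irreducible
        (monic_irreducible_of_subset_normalizedFactors hA.ne_zero (mem_powerset.1 hS)),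
      ← normalizedFactors_prod_of_monic_of_irreducible
        (monic_irreducible_of_subset_normalizedFactors hA.ne_zero (mem_powerset.1 hT))]
    exact congrArg normalizedFactors hST
  rw [finsum_mem_inter_support_eq _ _ _ hsupp, ← image_prod_powerset_normalizedFactors hA,
    finsum_mem_image hinj, finsum_mem_coe_finset]
  refine sum_congr rfl fun S hS => ?_
  rw [muFF_prod_of_monic_of_irreducible
    (monic_irreducible_of_subset_normalizedFactors hA.ne_zero (mem_powerset.1 hS))]

/-- Corollary 4.5: evaluation of `∑_{B ∣ A} μ(B) (Ω(B)+1)Ω(B)(Ω(B)-1)⋯(Ω(B)-ℓ)`. -/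
theorem stmt7 (A : Polynomial F) (hA : A.Monic) (ℓ : ℕ) :
    ∑ᶠ B ∈ {B : Polynomial F | B.Monic ∧ B ∣ A},
        (muFF B : ℤ) * ∏ i ∈ Finset.range (ℓ + 2), ((OmegaFF B : ℤ) + 1 - (i : ℤ))
      = if (ℓ : ℤ) = (OmegaFF A : ℤ) - 1 then
          (-1) ^ OmegaFF A * (Nat.factorial (OmegaFF A + 1) : ℤ)
        else if (ℓ : ℤ) = (OmegaFF A : ℤ) - 2 then
          (-1) ^ OmegaFF A * (Nat.factorial (OmegaFF A) : ℤ)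
        else 0 := by
  calc
    _ = ∑ S ∈ (normalizedFactors A).toFinset.powerset,
        (-1) ^ #S * ∏ i ∈ range (ℓ + 2), ((#(S.image natDegree) : ℤ) + 1 - i) := by
      rw [finsum_monic_dvd_muFF_mul hA]
      refine sum_congr rfl fun S hS => ?_
      rw [OmegaFF_prod_of_monic_of_irreducible
        (monic_irreducible_of_subset_normalizedFactors hA.ne_zero (mem_powerset.1 hS))]
    _ = ∑ T ∈ (NSet A).powerset,
        (-1) ^ #T * ∏ i ∈ range (ℓ + 2), ((#T : ℤ) + 1 - i) := by
      rw [sum_powerset_neg_one_pow_mul_image natDegree _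
          fun T => ∏ i ∈ range (ℓ + 2), ((#T : ℤ) + 1 - i),
        NSet_eq_image_natDegree hA.ne_zero]
    _ = ∑ k ∈ range (OmegaFF A + 1),
        (-1) ^ k * (OmegaFF A).choose k * ∏ i ∈ range (ℓ + 1 + 1), ((k : ℤ) + 1 - i) := by
      rw [sum_powerset_apply_card
        fun k => (-1 : ℤ) ^ k * ∏ i ∈ range (ℓ + 2), ((k : ℤ) + 1 - i)]
      refine sum_congr rfl fun k _ => ?_
      rw [nsmul_eq_mul, OmegaFF]
      ring
    _ = _ := by
      rw [sum_range_neg_one_pow_mul_choose_mul_prod]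
      split_ifs <;> first | rfl | omega
end

section
/- Let q be a prime power and 𝒮 an arbitrary subset of the set of primes in 𝔽_q[T]. For every positive integer n, the sum over monic B ∈ 𝒟(𝒮) with 1 ≤ deg B ≤ n of μ(B)·Ω(B)/q^{deg B} equals (1/q^n) times the sum over monic A of degree n of (Q_𝒮^{(2)}(A) − Q_𝒮^{(1)}(A)). -/
open Filter Topology Polynomial Asymptotics
open scoped Classical

variable {F : Type} [Field F] [Fintype F]

/-!
Since `q ^ (n - deg B)` is the number of monic `A` of degree `n` divisible by `B`, exchanging the
sums reduces the identity to one for each monic `A`: the sum of `μ(B) Ω(B)` over the `B ∈ 𝒟(𝒮)`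
dividing `A` is `Q⁽²⁾(A) - Q⁽¹⁾(A)`. Only squarefree `B` contribute: the products of the sets of
prime factors of `A` having a unique element `P` of least degree, with `P ∈ 𝒮`. Fixing `P`, the
remaining factors range over the subsets `V` of the prime factors of `A` of degree `> deg P`, and
the alternating sum of `1 + #(degrees of V)` over them is
`[those degrees take exactly one value] - [there are none]`, that is
`[deg P = Δ₂(A)] - [deg P = Δ₁(A)]`.
-/

open Finset

section SortedFinset

lemma card_filter_orderEmbOfFin_lt {α : Type*} [LinearOrder α] (s : Finset α) (i : Fin #s) :
    #{y ∈ s | s.orderEmbOfFin rfl i < y} = #s - 1 - i := by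
  have h : {y ∈ s | s.orderEmbOfFin rfl i < y} = (Ioi i).map (s.orderEmbOfFin rfl).toEmbedding := by
    ext y
    constructor
    · intro hy
      obtain ⟨hys, hlt⟩ := mem_filter.mp hy
      obtain ⟨j, rfl⟩ : y ∈ Set.range (s.orderEmbOfFin rfl) := by
        rwa [range_orderEmbOfFin]
      exact mem_map_of_mem _ (mem_Ioi.mpr ((s.orderEmbOfFin rfl).lt_iff_lt.mp hlt))
    · intro hy
      obtain ⟨j, hj, rfl⟩ := mem_map.mp hy
      exact mem_filter.mpr ⟨orderEmbOfFin_mem s rfl j,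
        (s.orderEmbOfFin rfl).lt_iff_lt.mpr (mem_Ioi.mp hj)⟩
  rw [h, card_map, Fin.card_Ioi]

/-- `x ≠ 0` rules out the default value `0` of `getD`. -/
lemma card_filter_lt_eq_iff_getD_reverse_sort {s : Finset ℕ} {x : ℕ} (hx : x ∈ s) (hx0 : x ≠ 0)
    (k : ℕ) : #{y ∈ s | x < y} = k ↔ (s.sort (· ≤ ·)).reverse.getD k 0 = x := by
  obtain ⟨i, rfl⟩ : x ∈ Set.range (s.orderEmbOfFin rfl) := by rwa [range_orderEmbOfFin]
  rw [card_filter_orderEmbOfFin_lt]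
  by_cases hk : k < #s
  · have hget : (s.sort (· ≤ ·)).reverse.getD k 0
        = s.orderEmbOfFin rfl ⟨#s - 1 - k, by omega⟩ := by
      rw [List.getD_eq_getElem _ _ (by simpa using hk), List.getElem_reverse,
        orderEmbOfFin_apply]
      simp
    rw [hget, (s.orderEmbOfFin rfl).injective.eq_iff, Fin.ext_iff]
    have := i.isLt
    dsimp only
    omega
  · rw [List.getD_eq_default _ _ (by simpa using hk)]
    constructor
    · omega
    · exact fun h => absurd h.symm hx0

end SortedFinset

section UniqueMin

variable {α : Type*} [DecidableEq α] (w : α → ℕ)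

lemma sum_powerset_neg_one_pow_card_mul_ite_mem_image (W : Finset α) {d : ℕ}
    (hd : d ∈ W.image w) :
    ∑ V ∈ W.powerset, (-1 : ℤ) ^ #V * (if d ∈ V.image w then 1 else 0)
      = -if W.image w = {d} then 1 else 0 := by
  have hW : W ≠ ∅ := by rintro rfl; simp at hd
  have hmiss : {V ∈ W.powerset | d ∉ V.image w} = {x ∈ W | w x ≠ d}.powerset := by
    ext V
    simp only [mem_filter, mem_powerset, mem_image, not_exists, not_and, subset_iff]
    exact ⟨fun h x hx => ⟨h.1 hx, h.2 x hx⟩, fun h => ⟨fun x hx => (h hx).1, fun x hx => (h hx).2⟩⟩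
  have hfiber : {x ∈ W | w x ≠ d} = ∅ ↔ W.image w = {d} := by
    rw [filter_eq_empty_iff, eq_singleton_iff_unique_mem]
    simp only [mem_image, ne_eq, not_not, forall_exists_index, and_imp, forall_apply_eq_imp_iff₂]
    exact ⟨fun h => ⟨mem_image.mp hd, h⟩, fun h => h.2⟩
  calc ∑ V ∈ W.powerset, (-1 : ℤ) ^ #V * (if d ∈ V.image w then 1 else 0)
      = ∑ V ∈ W.powerset, (-1 : ℤ) ^ #V - ∑ V ∈ W.powerset with d ∉ V.image w, (-1 : ℤ) ^ #V := by
        rw [sum_filter, ← sum_sub_distrib]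
        refine sum_congr rfl fun V _ => ?_
        split_ifs <;> simp
    _ = -if W.image w = {d} then 1 else 0 := by
        rw [hmiss, sum_powerset_neg_one_pow_card, sum_powerset_neg_one_pow_card, if_neg hW,
          if_congr hfiber rfl rfl, zero_sub]

lemma sum_powerset_neg_one_pow_card_mul_card_image (W : Finset α) :
    ∑ V ∈ W.powerset, (-1 : ℤ) ^ #V * #(V.image w) = -if #(W.image w) = 1 then 1 else 0 := by
  have hcard : ∀ V ∈ W.powerset,
      (#(V.image w) : ℤ) = ∑ d ∈ W.image w, if d ∈ V.image w then 1 else 0 := by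
    intro V hV
    rw [sum_boole, filter_mem_eq_inter,
      inter_eq_right.mpr (image_subset_image (mem_powerset.mp hV))]
  have hsingleton : (∑ d ∈ W.image w, if W.image w = {d} then (1 : ℤ) else 0)
      = if #(W.image w) = 1 then 1 else 0 := by
    rw [sum_boole]
    split_ifs with h
    · obtain ⟨a, ha⟩ := card_eq_one.mp h
      rw [ha, filter_singleton, if_pos rfl, card_singleton, Nat.cast_one]
    · rw [filter_false_of_mem fun d _ hd => h (by rw [hd, card_singleton])]
      simp
  calc ∑ V ∈ W.powerset, (-1 : ℤ) ^ #V * #(V.image w)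
      = ∑ d ∈ W.image w, ∑ V ∈ W.powerset, (-1 : ℤ) ^ #V * (if d ∈ V.image w then 1 else 0) := by
        rw [sum_comm]
        exact sum_congr rfl fun V hV => by rw [hcard V hV, mul_sum]
    _ = -if #(W.image w) = 1 then 1 else 0 := by
        rw [sum_congr rfl fun d hd => sum_powerset_neg_one_pow_card_mul_ite_mem_image w W hd,
          sum_neg_distrib, hsingleton]

def HasUniqueMinIn (S : Set α) (U : Finset α) : Prop :=
  ∃ P ∈ U, P ∈ S ∧ ∀ Q ∈ U, Q ≠ P → w P < w Q

lemma sum_powerset_filter_hasUniqueMinIn {M : Type*} [AddCommMonoid M] (W : Finset α)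
    (S : Set α) (f : Finset α → M) :
    ∑ U ∈ W.powerset with HasUniqueMinIn w S U, f U
      = ∑ P ∈ W with P ∈ S, ∑ V ∈ {Q ∈ W | w P < w Q}.powerset, f (insert P V) := by
  have not_mem {P : α} {V : Finset α} (hV : V ⊆ {Q ∈ W | w P < w Q}) : P ∉ V :=
    fun hP => lt_irrefl _ (mem_filter.mp (hV hP)).2
  rw [sum_sigma']
  symm
  refine sum_bij (fun σ _ => insert σ.1 σ.2) ?_ ?_ ?_ (fun _ _ => rfl)
  · rintro ⟨P, V⟩ hσ
    simp only [mem_sigma, mem_filter, mem_powerset] at hσ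
    obtain ⟨⟨hPW, hPS⟩, hV⟩ := hσ
    refine mem_filter.mpr ⟨mem_powerset.mpr (insert_subset hPW (hV.trans (filter_subset _ _))),
      P, mem_insert_self _ _, hPS, fun Q hQ hQP => ?_⟩
    exact (mem_filter.mp (hV ((mem_insert.mp hQ).resolve_left hQP))).2
  · rintro ⟨P, V⟩ h₁ ⟨R, V'⟩ h₂ heq
    simp only [mem_sigma, mem_filter, mem_powerset] at h₁ h₂ heq
    have hPR : P = R := by
      by_contra hne
      have hPV' : P ∈ V' := (mem_insert.mp (heq ▸ mem_insert_self P V)).resolve_left hne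
      have hRV : R ∈ V := (mem_insert.mp (heq ▸ mem_insert_self R V')).resolve_left (Ne.symm hne)
      have := (mem_filter.mp (h₁.2 hRV)).2
      have := (mem_filter.mp (h₂.2 hPV')).2
      omega
    subst hPR
    rw [← erase_insert (not_mem h₁.2), heq, erase_insert (not_mem h₂.2)]
  · intro U hU
    obtain ⟨hUW, P, hPU, hPS, hmin⟩ := mem_filter.mp hU
    refine ⟨⟨P, U.erase P⟩, ?_, insert_erase hPU⟩
    simp only [mem_sigma, mem_filter, mem_powerset]
    refine ⟨⟨mem_powerset.mp hUW hPU, hPS⟩, fun Q hQ => ?_⟩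
    exact mem_filter.mpr ⟨mem_powerset.mp hUW (mem_of_mem_erase hQ),
      hmin Q (mem_of_mem_erase hQ) (ne_of_mem_erase hQ)⟩

lemma sum_powerset_insert_neg_one_pow_card_mul_card_image (W : Finset α) {P : α}
    (hP : P ∈ W) (hw : w P ≠ 0) :
    ∑ V ∈ {Q ∈ W | w P < w Q}.powerset, (-1 : ℤ) ^ #(insert P V) * #((insert P V).image w)
      = (if ((W.image w).sort (· ≤ ·)).reverse.getD 1 0 = w P then 1 else 0)
        - if ((W.image w).sort (· ≤ ·)).reverse.getD 0 0 = w P then 1 else 0 := by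
  set W' := {Q ∈ W | w P < w Q}
  have hterm : ∀ V ∈ W'.powerset, (-1 : ℤ) ^ #(insert P V) * #((insert P V).image w)
      = -(-1 : ℤ) ^ #V - (-1 : ℤ) ^ #V * #(V.image w) := by
    intro V hV
    have hwP : w P ∉ V.image w := fun h => by
      obtain ⟨Q, hQ, hQP⟩ := mem_image.mp h
      exact (mem_filter.mp (mem_powerset.mp hV hQ)).2.ne' hQP
    rw [card_insert_of_notMem (fun h => hwP (mem_image_of_mem w h)), image_insert,
      card_insert_of_notMem hwP]
    push_cast
    ring
  have himage : W'.image w = {y ∈ W.image w | w P < y} := filter_image.symm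
  have hwPmem : w P ∈ W.image w := mem_image_of_mem w hP
  have hempty : W' = ∅ ↔ ((W.image w).sort (· ≤ ·)).reverse.getD 0 0 = w P := by
    rw [← image_eq_empty (f := w), himage, ← card_eq_zero,
      card_filter_lt_eq_iff_getD_reverse_sort hwPmem hw]
  have hone : #(W'.image w) = 1 ↔ ((W.image w).sort (· ≤ ·)).reverse.getD 1 0 = w P := by
    rw [himage, card_filter_lt_eq_iff_getD_reverse_sort hwPmem hw]
  rw [sum_congr rfl hterm, sum_sub_distrib, sum_neg_distrib, sum_powerset_neg_one_pow_card,
    sum_powerset_neg_one_pow_card_mul_card_image, if_congr hempty rfl rfl,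
    if_congr hone rfl rfl]
  ring

/-- `getD 0 0` and `getD 1 0` are the largest and the second largest value of `w` on `W` (`0` if
there is none), so the right-hand side is `Q⁽²⁾ - Q⁽¹⁾` in this generality. -/
theorem sum_powerset_hasUniqueMinIn_neg_one_pow_card_mul_card_image (W : Finset α) (S : Set α)
    (hw : ∀ P ∈ W, w P ≠ 0) :
    ∑ U ∈ W.powerset with HasUniqueMinIn w S U, (-1 : ℤ) ^ #U * #(U.image w)
      = #{P ∈ W | P ∈ S ∧ w P = ((W.image w).sort (· ≤ ·)).reverse.getD 1 0}
        - #{P ∈ W | P ∈ S ∧ w P = ((W.image w).sort (· ≤ ·)).reverse.getD 0 0} := by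
  rw [sum_powerset_filter_hasUniqueMinIn, sum_congr rfl fun P hP =>
      sum_powerset_insert_neg_one_pow_card_mul_card_image w W (mem_filter.mp hP).1
        (hw P (mem_filter.mp hP).1),
    sum_sub_distrib, sum_boole, sum_boole, filter_filter, filter_filter]
  simp only [eq_comm]

lemma getD_zero_sort_eq_min' (s : Finset ℕ) (hs : s.Nonempty) :
    (s.sort (· ≤ ·)).getD 0 0 = s.min' hs := by
  rw [List.getD_eq_getElem _ _ (by simpa using hs.card_pos)]
  exact sorted_zero_eq_min'

lemma hasUniqueMinIn_iff (W : Finset α) (S : Set α) :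
    HasUniqueMinIn w S W
      ↔ ∃ P ∈ S, {Q ∈ W | w Q = ((W.image w).sort (· ≤ ·)).getD 0 0} = {P} := by
  constructor
  · rintro ⟨P, hPW, hPS, hmin⟩
    have hne : (W.image w).Nonempty := ⟨_, mem_image_of_mem w hPW⟩
    have hPmin : ((W.image w).sort (· ≤ ·)).getD 0 0 = w P := by
      rw [getD_zero_sort_eq_min' _ hne]
      refine le_antisymm (min'_le _ _ (mem_image_of_mem w hPW)) ?_
      obtain ⟨Q, hQW, hQ⟩ := mem_image.mp (min'_mem _ hne)
      rw [← hQ]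
      rcases eq_or_ne Q P with rfl | hQP
      · exact le_rfl
      · exact (hmin Q hQW hQP).le
    refine ⟨P, hPS, eq_singleton_iff_unique_mem.mpr
      ⟨mem_filter.mpr ⟨hPW, hPmin.symm⟩, fun Q hQ => ?_⟩⟩
    obtain ⟨hQW, hQ⟩ := mem_filter.mp hQ
    by_contra hQP
    have := hmin Q hQW hQP
    omega
  · rintro ⟨P, hPS, hP⟩
    obtain ⟨hPW, hPmin⟩ := mem_filter.mp (hP ▸ mem_singleton_self P)
    have hne : (W.image w).Nonempty := ⟨_, mem_image_of_mem w hPW⟩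
    refine ⟨P, hPW, hPS, fun Q hQW hQP => lt_of_le_of_ne ?_ fun h => hQP ?_⟩
    · rw [hPmin, getD_zero_sort_eq_min' _ hne]
      exact min'_le _ _ (mem_image_of_mem w hQW)
    · exact mem_singleton.mp (hP ▸ mem_filter.mpr ⟨hQW, h ▸ hPmin⟩)

end UniqueMin

section MonicPrimeFactors

open UniqueFactorizationMonoid

variable {K : Type} [Field K]

noncomputable def monicPrimeFactors (A : K[X]) : Finset K[X] := (normalizedFactors A).toFinset

lemma monic_of_mem_normalizedFactors {A P : K[X]} (h : P ∈ normalizedFactors A) : P.Monic := by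
  rw [← normalize_normalized_factor P h]
  exact monic_normalize (prime_of_normalized_factor P h).ne_zero

lemma mem_monicPrimeFactors {A P : K[X]} (hA : A ≠ 0) :
    P ∈ monicPrimeFactors A ↔ P.Monic ∧ Irreducible P ∧ P ∣ A := by
  rw [monicPrimeFactors, Multiset.mem_toFinset]
  refine ⟨fun h => ⟨monic_of_mem_normalizedFactors h, irreducible_of_normalized_factor P h,
    dvd_of_mem_normalizedFactors h⟩, fun ⟨hP, hirr, hdvd⟩ => ?_⟩
  obtain ⟨Q, hQ, hPQ⟩ := exists_mem_normalizedFactors_of_dvd hA hirr hdvd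
  rwa [eq_of_monic_of_associated hP (monic_of_mem_normalizedFactors hQ) hPQ]

lemma natDegree_ne_zero_of_mem_monicPrimeFactors {A P : K[X]} (hA : A ≠ 0)
    (hP : P ∈ monicPrimeFactors A) : P.natDegree ≠ 0 :=
  ((mem_monicPrimeFactors hA).mp hP).2.1.natDegree_pos.ne'

lemma monicPrimeFactors_subset_of_dvd {A B : K[X]} (hA : A ≠ 0) (hB : B ≠ 0) (h : B ∣ A) :
    monicPrimeFactors B ⊆ monicPrimeFactors A := fun P hP => by
  obtain ⟨hPm, hPirr, hPB⟩ := (mem_monicPrimeFactors hB).mp hP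
  exact (mem_monicPrimeFactors hA).mpr ⟨hPm, hPirr, hPB.trans h⟩

lemma NSet_eq_image_monicPrimeFactors {A : K[X]} (hA : A ≠ 0) :
    NSet A = (monicPrimeFactors A).image natDegree := by
  ext d
  simp only [NSet, Finset.mem_filter, Finset.mem_range, Finset.mem_image,
    mem_monicPrimeFactors hA]
  constructor
  · rintro ⟨-, P, hP, hirr, hdvd, rfl⟩
    exact ⟨P, ⟨hP, hirr, hdvd⟩, rfl⟩
  · rintro ⟨P, ⟨hP, hirr, hdvd⟩, rfl⟩
    exact ⟨Nat.lt_succ_of_le (natDegree_le_of_dvd hdvd hA), P, hP, hirr, hdvd, rfl⟩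

lemma OmegaFF_eq_card_image {A : K[X]} (hA : A ≠ 0) :
    OmegaFF A = #((monicPrimeFactors A).image natDegree) := by
  rw [OmegaFF, NSet_eq_image_monicPrimeFactors hA]

lemma muFF_of_squarefree {A : K[X]} (hA : Squarefree A) :
    muFF A = (-1) ^ #(monicPrimeFactors A) :=
  if_pos hA

lemma DeltaLarge_succ_eq {A : K[X]} (hA : A ≠ 0) (k : ℕ) :
    DeltaLarge (k + 1) A
      = (((monicPrimeFactors A).image natDegree).sort (· ≤ ·)).reverse.getD k 0 := by
  rw [DeltaLarge, NSet_eq_image_monicPrimeFactors hA, Nat.add_sub_cancel]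

lemma QS_eq_card_filter {S : Set K[X]} (hS : S ⊆ {P : K[X] | P.Monic ∧ Irreducible P})
    {A : K[X]} (hA : A ≠ 0) (k : ℕ) :
    QS S k A = #{P ∈ monicPrimeFactors A | P ∈ S ∧ P.natDegree = DeltaLarge k A} := by
  rw [QS, ← Set.ncard_coe_finset]
  congr 1
  ext P
  simp only [Set.mem_ofPred_eq, Finset.coe_filter, mem_monicPrimeFactors hA]
  exact ⟨fun ⟨hPS, hdvd, hdeg⟩ => ⟨⟨(hS hPS).1, (hS hPS).2, hdvd⟩, hPS, hdeg⟩,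
    fun ⟨⟨_, _, hdvd⟩, hPS, hdeg⟩ => ⟨hPS, hdvd, hdeg⟩⟩

lemma Pmin_eq_coe_filter {B : K[X]} (hB : B ≠ 0) :
    Pmin B = ↑{Q ∈ monicPrimeFactors B |
      Q.natDegree = (((monicPrimeFactors B).image natDegree).sort (· ≤ ·)).getD 0 0} := by
  ext P
  simp only [Pmin, deltaSmall, Nat.sub_self, NSet_eq_image_monicPrimeFactors hB,
    Set.mem_ofPred_eq, Finset.coe_filter, mem_monicPrimeFactors hB, and_assoc]

lemma mem_DSet_iff {S : Set K[X]} {B : K[X]} (hB : B.Monic) :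
    B ∈ DSet S ↔ HasUniqueMinIn natDegree S (monicPrimeFactors B) := by
  simp only [hasUniqueMinIn_iff, DSet, Set.mem_ofPred_eq, Pmin_eq_coe_filter hB.ne_zero,
    Finset.coe_eq_singleton, hB, true_and]

lemma natDegree_pos_of_mem_DSet {S : Set K[X]} {B : K[X]} (hB : B ∈ DSet S) : 0 < B.natDegree := by
  obtain ⟨hBm, P, -, hP⟩ := hB
  obtain ⟨-, hirr, hdvd, -⟩ : P ∈ Pmin B := hP ▸ rfl
  exact hirr.natDegree_pos.trans_le (natDegree_le_of_dvd hdvd hBm.ne_zero)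

lemma normalizedFactors_prod_eq_val {U : Finset K[X]} (hU : ∀ P ∈ U, P.Monic ∧ Irreducible P) :
    normalizedFactors (∏ P ∈ U, P) = U.val := by
  rw [Finset.prod_eq_multiset_prod, Multiset.map_id',
    normalizedFactors_prod_eq _ fun P hP => (hU P hP).2]
  conv_rhs => rw [← Multiset.map_id U.val]
  exact Multiset.map_congr rfl fun P hP => (hU P hP).1.normalize_eq_self

lemma monicPrimeFactors_prod {U : Finset K[X]} (hU : ∀ P ∈ U, P.Monic ∧ Irreducible P) :
    monicPrimeFactors (∏ P ∈ U, P) = U := by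
  rw [monicPrimeFactors, normalizedFactors_prod_eq_val hU, Finset.val_toFinset]

lemma squarefree_prod_of_monic_irreducible {U : Finset K[X]}
    (hU : ∀ P ∈ U, P.Monic ∧ Irreducible P) : Squarefree (∏ P ∈ U, P) := by
  rw [squarefree_iff_nodup_normalizedFactors
      (monic_prod_of_monic _ _ fun P hP => (hU P hP).1).ne_zero, normalizedFactors_prod_eq_val hU]
  exact U.nodup

lemma prod_dvd_of_subset_monicPrimeFactors {A : K[X]} (hA : A ≠ 0) {U : Finset K[X]}
    (hU : U ⊆ monicPrimeFactors A) : ∏ P ∈ U, P ∣ A := by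
  have hU' : ∀ P ∈ U, P.Monic ∧ Irreducible P := fun P hP =>
    have h := (mem_monicPrimeFactors hA).mp (hU hP)
    ⟨h.1, h.2.1⟩
  rw [dvd_iff_normalizedFactors_le_normalizedFactors
      (monic_prod_of_monic _ _ fun P hP => (hU' P hP).1).ne_zero hA,
    normalizedFactors_prod_eq_val hU', Multiset.le_iff_subset U.nodup]
  exact fun P hP => Multiset.mem_toFinset.mp (hU hP)

lemma prod_monicPrimeFactors {B : K[X]} (hB : B.Monic) (hsq : Squarefree B) :
    ∏ P ∈ monicPrimeFactors B, P = B := by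
  have hnd := (squarefree_iff_nodup_normalizedFactors hB.ne_zero).mp hsq
  refine eq_of_monic_of_associated (monic_prod_of_monic _ _ fun P hP =>
    monic_of_mem_normalizedFactors (Multiset.mem_toFinset.mp hP)) hB ?_
  rw [monicPrimeFactors, Finset.prod_eq_multiset_prod, Multiset.toFinset_val,
    Multiset.dedup_eq_self.mpr hnd, Multiset.map_id']
  exact prod_normalizedFactors hB.ne_zero

end MonicPrimeFactors

section DivisorSum

variable {K : Type} [Field K]

theorem sum_muFF_mul_OmegaFF_eq_QS_sub_QS {S : Set K[X]}
    (hS : S ⊆ {P : K[X] | P.Monic ∧ Irreducible P}) {A : K[X]} (hA : A.Monic)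
    (T : Finset K[X]) (hT : ∀ B, B ∈ T ↔ B ∈ DSet S ∧ B ∣ A) :
    ∑ B ∈ T, muFF B * (OmegaFF B : ℤ) = QS S 2 A - QS S 1 A := by
  have hA0 := hA.ne_zero
  have hprime {U : Finset K[X]} (hU : U ∈ (monicPrimeFactors A).powerset) :
      ∀ P ∈ U, P.Monic ∧ Irreducible P := fun P hP =>
    have h := (mem_monicPrimeFactors hA0).mp (mem_powerset.mp hU hP)
    ⟨h.1, h.2.1⟩
  calc ∑ B ∈ T, muFF B * (OmegaFF B : ℤ) = ∑ B ∈ T with Squarefree B, muFF B * (OmegaFF B : ℤ) :=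
        (sum_filter_of_ne fun B _ h =>
          by_contra fun hsq => h (by rw [muFF, if_neg hsq, zero_mul])).symm
    _ = ∑ U ∈ (monicPrimeFactors A).powerset with HasUniqueMinIn natDegree S U,
          (-1) ^ #U * (#(U.image natDegree) : ℤ) := by
        refine sum_nbij' monicPrimeFactors (fun U => ∏ P ∈ U, P) ?_ ?_ ?_ ?_ ?_
        · intro B hB
          obtain ⟨hBT, -⟩ := mem_filter.mp hB
          obtain ⟨hBD, hBA⟩ := (hT B).mp hBT
          exact mem_filter.mpr ⟨mem_powerset.mpr
            (monicPrimeFactors_subset_of_dvd hA0 hBD.1.ne_zero hBA), (mem_DSet_iff hBD.1).mp hBD⟩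
        · intro U hU
          obtain ⟨hUA, hUmin⟩ := mem_filter.mp hU
          have hmon := monic_prod_of_monic _ _ fun P hP => (hprime hUA P hP).1
          refine mem_filter.mpr ⟨(hT _).mpr ⟨(mem_DSet_iff hmon).mpr ?_,
            prod_dvd_of_subset_monicPrimeFactors hA0 (mem_powerset.mp hUA)⟩,
            squarefree_prod_of_monic_irreducible (hprime hUA)⟩
          rwa [monicPrimeFactors_prod (hprime hUA)]
        · intro B hB
          obtain ⟨hBT, hsq⟩ := mem_filter.mp hB
          exact prod_monicPrimeFactors ((hT B).mp hBT).1.1 hsq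
        · exact fun U hU => monicPrimeFactors_prod (hprime (mem_filter.mp hU).1)
        · intro B hB
          obtain ⟨hBT, hsq⟩ := mem_filter.mp hB
          rw [muFF_of_squarefree hsq, OmegaFF_eq_card_image ((hT B).mp hBT).1.1.ne_zero]
    _ = QS S 2 A - QS S 1 A := by
        rw [sum_powerset_hasUniqueMinIn_neg_one_pow_card_mul_card_image _ _ _
            fun P hP => natDegree_ne_zero_of_mem_monicPrimeFactors hA0 hP,
          QS_eq_card_filter hS hA0, QS_eq_card_filter hS hA0,
          (DeltaLarge_succ_eq hA0 1 : DeltaLarge 2 A = _), DeltaLarge_succ_eq hA0 0]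

end DivisorSum

section Counting

lemma finite_setOf_monic_natDegree_eq (d : ℕ) : {p : F[X] | p.Monic ∧ p.natDegree = d}.Finite :=
  Set.finite_coe_iff.mp
    (Finite.of_equiv _ ((monicEquivDegreeLT d).trans (degreeLTEquiv F d).toEquiv).symm)

lemma ncard_setOf_monic_natDegree_eq (d : ℕ) :
    {p : F[X] | p.Monic ∧ p.natDegree = d}.ncard = Fintype.card F ^ d := by
  rw [← Nat.card_coe_set_eq]
  exact (Nat.card_congr ((monicEquivDegreeLT d).trans (degreeLTEquiv F d).toEquiv)).trans
    (by rw [Nat.card_eq_fintype_card, Fintype.card_fun, Fintype.card_fin])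

noncomputable def monicOfDegree (n : ℕ) : Finset F[X] :=
  (finite_setOf_monic_natDegree_eq n).toFinset

lemma mem_monicOfDegree {n : ℕ} {A : F[X]} : A ∈ monicOfDegree n ↔ A.Monic ∧ A.natDegree = n :=
  Set.Finite.mem_toFinset _

lemma card_filter_dvd_monicOfDegree {B : F[X]} (hB : B.Monic) {n : ℕ} (h : B.natDegree ≤ n) :
    #{A ∈ monicOfDegree n | B ∣ A} = Fintype.card F ^ (n - B.natDegree) := by
  have himage : (((monicOfDegree n).filter (B ∣ ·) : Finset F[X]) : Set F[X])
      = (B * ·) '' {C : F[X] | C.Monic ∧ C.natDegree = n - B.natDegree} := by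
    ext A
    rw [coe_filter, Set.mem_ofPred_eq, mem_monicOfDegree]
    constructor
    · rintro ⟨⟨hA, rfl⟩, C, rfl⟩
      have hC : C.Monic := hB.of_mul_monic_left hA
      exact ⟨C, ⟨hC, by rw [natDegree_mul hB.ne_zero hC.ne_zero]; omega⟩, rfl⟩
    · rintro ⟨C, ⟨hC, hCdeg⟩, rfl⟩
      exact ⟨⟨hB.mul hC, by rw [natDegree_mul hB.ne_zero hC.ne_zero]; omega⟩, dvd_mul_right B C⟩
  rw [← Set.ncard_coe_finset, himage,
    Set.ncard_image_of_injective _ (mul_right_injective₀ hB.ne_zero),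
    ncard_setOf_monic_natDegree_eq]

end Counting

theorem stmt12_general (S : Set (Polynomial F))
    (hS : S ⊆ {P : Polynomial F | P.Monic ∧ Irreducible P})
    (n : ℕ) :
    ∑ᶠ B ∈ {B : Polynomial F | B ∈ DSet S ∧ 1 ≤ B.natDegree ∧ B.natDegree ≤ n},
        (muFF B : ℝ) * (OmegaFF B : ℝ) / (Fintype.card F : ℝ) ^ B.natDegree
      = (1 / (Fintype.card F : ℝ) ^ n) *
          ∑ᶠ A ∈ {A : Polynomial F | A.Monic ∧ A.natDegree = n},
            ((QS S 2 A : ℝ) - (QS S 1 A : ℝ)) := by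
  have hT : {B : F[X] | B ∈ DSet S ∧ 1 ≤ B.natDegree ∧ B.natDegree ≤ n}.Finite :=
    ((Set.finite_le_nat n).biUnion fun d _ => finite_setOf_monic_natDegree_eq d).subset
      fun B hB => Set.mem_biUnion hB.2.2 ⟨hB.1.1, rfl⟩
  rw [finsum_mem_eq_finite_toFinset_sum _ hT,
    finsum_mem_eq_finite_toFinset_sum _ (finite_setOf_monic_natDegree_eq n)]
  change ∑ B ∈ hT.toFinset, _ = _ * ∑ A ∈ monicOfDegree n, _
  have hdivisors (A : F[X]) (hA : A ∈ monicOfDegree n) (B : F[X]) :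
      B ∈ hT.toFinset.filter (· ∣ A) ↔ B ∈ DSet S ∧ B ∣ A := by
    obtain ⟨hAm, rfl⟩ := mem_monicOfDegree.mp hA
    rw [mem_filter, hT.mem_toFinset]
    exact ⟨fun h => ⟨h.1.1, h.2⟩, fun ⟨hBD, hBA⟩ =>
      ⟨⟨hBD, natDegree_pos_of_mem_DSet hBD, natDegree_le_of_dvd hBA hAm.ne_zero⟩, hBA⟩⟩
  calc ∑ B ∈ hT.toFinset, (muFF B : ℝ) * (OmegaFF B : ℝ) / (Fintype.card F : ℝ) ^ B.natDegree
      = 1 / (Fintype.card F : ℝ) ^ n * ∑ B ∈ hT.toFinset, ∑ A ∈ monicOfDegree n,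
          if B ∣ A then (muFF B : ℝ) * OmegaFF B else 0 := by
        rw [mul_sum]
        refine sum_congr rfl fun B hB => ?_
        obtain ⟨hBD, -, hBn⟩ := hT.mem_toFinset.mp hB
        rw [← sum_filter, sum_const, nsmul_eq_mul, card_filter_dvd_monicOfDegree hBD.1 hBn,
          Nat.cast_pow, ← pow_sub_mul_pow _ hBn]
        field_simp
    _ = 1 / (Fintype.card F : ℝ) ^ n *
          ∑ A ∈ monicOfDegree n, ((QS S 2 A : ℝ) - (QS S 1 A : ℝ)) := by
        rw [sum_comm]
        refine congrArg _ (sum_congr rfl fun A hA => ?_)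
        rw [← sum_filter]
        exact_mod_cast sum_muFF_mul_OmegaFF_eq_QS_sub_QS hS (mem_monicOfDegree.mp hA).1 _
          (hdivisors A hA)

/-- The partial-sum identity relating the restricted weighted Möbius sum to the averages of
`Q_𝒮^{(2)} - Q_𝒮^{(1)}` over monic polynomials of degree `n`. -/
theorem stmt12 (S : Set (Polynomial F))
    (hS : S ⊆ {P : Polynomial F | P.Monic ∧ Irreducible P})
    (n : ℕ) (hn : 0 < n) :
    ∑ᶠ B ∈ {B : Polynomial F | B ∈ DSet S ∧ 1 ≤ B.natDegree ∧ B.natDegree ≤ n},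
        (muFF B : ℝ) * (OmegaFF B : ℝ) / (Fintype.card F : ℝ) ^ B.natDegree
      = (1 / (Fintype.card F : ℝ) ^ n) *
          ∑ᶠ A ∈ {A : Polynomial F | A.Monic ∧ A.natDegree = n},
            ((QS S 2 A : ℝ) - (QS S 1 A : ℝ)) :=
  stmt12_general S hS n
end
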